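/- Let r < t be positive integers with t = 2s (even). Label the parts of K_{r,t} as {u_0,…,u_{r−1}} and {v_0,…,v_{t−1}}. For 0 ≤ j ≤ s−1 define G_j with edge set {u_i v_{(i+2j) mod t} : 0 ≤ i ≤ r−1} ∪ {u_i v_{(i+2j+1) mod t} : 0 ≤ i ≤ r−1}. Then each G_j is a path with 2r edges, the G_j are pairwise edge-disjoint, and their union is all of K_{r,t}; hence K_{r,t} decomposes into exactly s paths and is of class 1^±. -/

import Mathlib

/-!
A decomposition of `G` into `s` edge-disjoint paths gives a `2s`-edge-colouring of `(G, σ)` for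
every signature `σ`, the `j`-th path using the colours `±(j + 1)`. Indeed a signed path
`x 0, …, x n` is balanced: switching at `x m` by the product of the signs of its first `m` edges
makes every edge positive, and an all-positive path is coloured properly by giving each edge the
colour `+1` at its first vertex and `-1` at its second.

For `r < t = 2s` the graph `G_j` is the zigzag `v_{2j}, u_0, v_{2j+1}, u_1, …, u_{r-1}, v_{2j+r}`,
a path because `r < t`, and `u_i v_b` lies on `G_j` exactly when `(b - i) mod t ∈ {2j, 2j + 1}`;
so the `G_j`, `j < s`, decompose `K_{r,t}`. Since the `t` colours at a vertex `u_i` are distinct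
and `|M n| = n`, no signed colouring uses fewer than `t = 2s = Δ(K_{r,t})` colours.
-/

open SimpleGraph

namespace Signed

variable {V : Type*}

/-- The color set `M n`. -/
def colorSet (n : ℕ) : Set ℤ :=
  {m : ℤ | 2 * m.natAbs ≤ n ∧ (Even n → m ≠ 0)}

/-- `f` is an `n`-edge-coloring of the signed graph `(G, σ)`. -/
def IsEdgeColoring (G : SimpleGraph V) (σ : Sym2 V → ℤ) (n : ℕ)
    (f : V → Sym2 V → ℤ) : Prop :=
  (∀ u v, G.Adj u v → f u s(u, v) ∈ colorSet n) ∧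
  (∀ u v, G.Adj u v → f u s(u, v) = - σ s(u, v) * f v s(u, v)) ∧
  (∀ u v w, G.Adj u v → G.Adj u w → v ≠ w → f u s(u, v) ≠ f u s(u, w))

/-- `(G, σ)` admits an `n`-edge-coloring. -/
def Colorable (G : SimpleGraph V) (σ : Sym2 V → ℤ) (n : ℕ) : Prop :=
  ∃ f, IsEdgeColoring G σ n f

/-- The signed chromatic index. -/
noncomputable def chromIndex (G : SimpleGraph V) (σ : Sym2 V → ℤ) : ℕ :=
  sInf {n | Colorable G σ n}

/-- `σ` is a signature on `G`: it takes values `±1` on edges. -/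
def IsSignature (G : SimpleGraph V) (σ : Sym2 V → ℤ) : Prop :=
  ∀ e ∈ G.edgeSet, σ e = 1 ∨ σ e = -1

/-- Maximum degree (classical decidability). -/
noncomputable def maxDeg [Fintype V] (G : SimpleGraph V) : ℕ :=
  @SimpleGraph.maxDegree V G _ (Classical.decRel _)

/-- degree of a vertex, instance-free. -/
noncomputable def deg (G : SimpleGraph V) (v : V) : ℕ :=
  (G.neighborSet v).ncard

/-- A signed graph is balanced if every cycle has sign product `1`. -/
def Balanced (H : SimpleGraph V) (σ : Sym2 V → ℤ) : Prop :=
  ∀ (u : V) (w : H.Walk u u), w.IsCycle → (w.edges.map σ).prod = 1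

/-- A set of edges of `G` forming a matching. -/
def IsMatchingSet (G : SimpleGraph V) (M : Set (Sym2 V)) : Prop :=
  M ⊆ G.edgeSet ∧ ∀ e ∈ M, ∀ e' ∈ M, ∀ v : V, v ∈ e → v ∈ e' → e = e'

/-- `H` is a path graph: some path walk carries all of its edges. -/
def IsPathGraph (H : SimpleGraph V) : Prop :=
  ∃ (u v : V) (p : H.Walk u v), p.IsPath ∧ ∀ e, e ∈ H.edgeSet ↔ e ∈ p.edges

/-- Class `1^±`. -/
def Class1pm [Fintype V] (G : SimpleGraph V) : Prop :=
  ∀ σ : Sym2 V → ℤ, IsSignature G σ → chromIndex G σ = maxDeg G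

/-- Class `2^±`. -/
def Class2pm [Fintype V] (G : SimpleGraph V) : Prop :=
  ∀ σ : Sym2 V → ℤ, IsSignature G σ → chromIndex G σ = maxDeg G + 1

end Signed

open Signed SimpleGraph


/-- The vertex `v_{m mod t}` of the `t`-side. -/
def bidx (t : ℕ) (ht : 0 < t) (m : ℕ) : Fin t := ⟨m % t, Nat.mod_lt _ ht⟩

/-- The `j`-th path `G_j` in the decomposition of `K_{r,t}`. -/
def bipPath (r t : ℕ) (ht : 0 < t) (j : ℕ) : SimpleGraph (Fin r ⊕ Fin t) :=
  SimpleGraph.fromEdgeSet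
    {e | ∃ i : Fin r,
      e = s(Sum.inl i, Sum.inr (bidx t ht (i.val + 2 * j))) ∨
      e = s(Sum.inl i, Sum.inr (bidx t ht (i.val + 2 * j + 1)))}

namespace SimpleGraph

variable {V : Type*} {G : SimpleGraph V}

lemma Walk.mem_edges_iff_exists_getVert {u v : V} {p : G.Walk u v}
    {e : Sym2 V} : e ∈ p.edges ↔ ∃ k < p.length, e = s(p.getVert k, p.getVert (k + 1)) := by
  simp only [List.mem_iff_getElem, Walk.getElem_edges, Walk.length_edges, eq_comm, exists_prop]

lemma exists_walk_getVert_eq (x : ℕ → V) :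
    ∀ n, (∀ k < n, G.Adj (x k) (x (k + 1))) →
      ∃ p : G.Walk (x 0) (x n), p.length = n ∧ ∀ k ≤ n, p.getVert k = x k
  | 0, _ => ⟨.nil, rfl, fun k hk => by simp [Nat.le_zero.mp hk]⟩
  | n + 1, hadj => by
    obtain ⟨p, hlen, hp⟩ := exists_walk_getVert_eq (fun k => x (k + 1)) n
      fun k hk => hadj (k + 1) (by omega)
    refine ⟨.cons (hadj 0 n.succ_pos) p, by simp [hlen], fun k hk => ?_⟩
    cases k with
    | zero => simp
    | succ k => simpa using hp k (by omega)

end SimpleGraph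

namespace Signed

variable {V : Type*}

lemma colorSet_two_mul (s : ℕ) : colorSet (2 * s) = Set.Icc (-(s : ℤ)) s \ {0} := by
  ext m
  simp only [colorSet, Set.mem_ofPred_eq, Set.mem_sdiff, Set.mem_Icc, Set.mem_singleton_iff,
    even_two_mul, forall_const]
  omega

lemma colorSet_two_mul_add_one (s : ℕ) : colorSet (2 * s + 1) = Set.Icc (-(s : ℤ)) s := by
  ext m
  simp only [colorSet, Set.mem_ofPred_eq, Set.mem_Icc, Nat.not_even_two_mul_add_one,
    IsEmpty.forall_iff, and_true]
  omega

lemma mem_colorSet_two {m : ℤ} : m ∈ colorSet 2 ↔ m = 1 ∨ m = -1 := by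
  rw [← mul_one 2, colorSet_two_mul]
  simp only [Set.mem_sdiff, Set.mem_Icc, Set.mem_singleton_iff]
  omega

lemma ncard_colorSet (n : ℕ) : (colorSet n).ncard = n := by
  obtain ⟨s, rfl | rfl⟩ := Nat.even_or_odd' n
  · rw [colorSet_two_mul, Set.ncard_sdiff_singleton_of_mem (by simp), ← Finset.coe_Icc,
      Set.ncard_coe_finset, Int.card_Icc]
    omega
  · rw [colorSet_two_mul_add_one, ← Finset.coe_Icc, Set.ncard_coe_finset, Int.card_Icc]
    omega

lemma finite_colorSet (n : ℕ) : (colorSet n).Finite :=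
  (Set.finite_Icc (-(n : ℤ)) n).subset fun m hm => by
    simp only [colorSet, Set.mem_ofPred_eq, Set.mem_Icc] at hm ⊢
    omega

lemma mem_colorSet_two_mul {s : ℕ} {m : ℤ} :
    m ∈ colorSet (2 * s) ↔ m ≠ 0 ∧ m.natAbs ≤ s := by
  simp only [colorSet_two_mul, Set.mem_sdiff, Set.mem_Icc, Set.mem_singleton_iff]
  omega

variable {G : SimpleGraph V} {σ : Sym2 V → ℤ} {n : ℕ}

lemma deg_le_of_colorable (h : Colorable G σ n) (u : V) : deg G u ≤ n := by
  obtain ⟨f, hmem, -, hinj⟩ := h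
  rw [deg, ← ncard_colorSet n]
  exact Set.ncard_le_ncard_of_injOn (fun v => f u s(u, v)) (fun v hv => hmem u v hv)
    (fun v hv w hw hvw => by_contra fun hne => hinj u v w hv hw hne hvw) (finite_colorSet n)

lemma deg_eq_degree (v : V) [Fintype (G.neighborSet v)] : deg G v = G.degree v := by
  rw [deg, Set.ncard_eq_toFinset_card']
  rfl

lemma deg_le_maxDeg [Fintype V] (G : SimpleGraph V) (v : V) : deg G v ≤ maxDeg G := by
  let := Classical.decRel G.Adj
  rw [deg_eq_degree]
  exact G.degree_le_maxDegree v

lemma maxDeg_le_of_forall_deg_le [Fintype V] (h : ∀ v, deg G v ≤ n) : maxDeg G ≤ n := by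
  let := Classical.decRel G.Adj
  exact G.maxDegree_le_of_forall_degree_le n fun v => deg_eq_degree (G := G) v ▸ h v

lemma chromIndex_eq_maxDeg_of_colorable [Fintype V] (h : Colorable G σ (maxDeg G)) :
    chromIndex G σ = maxDeg G :=
  le_antisymm (Nat.sInf_le h) (le_csInf ⟨_, h⟩ fun _ hn =>
    maxDeg_le_of_forall_deg_le (deg_le_of_colorable hn))

section completeBipartiteGraph

variable {W₁ W₂ : Type*}

lemma deg_completeBipartiteGraph_inl (a : W₁) :
    deg (completeBipartiteGraph W₁ W₂) (Sum.inl a) = Nat.card W₂ := by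
  have : (completeBipartiteGraph W₁ W₂).neighborSet (Sum.inl a) = Set.range Sum.inr := by
    ext (_ | _) <;> simp
  rw [deg, this, Set.ncard_range_of_injective Sum.inr_injective]

lemma deg_completeBipartiteGraph_inr (b : W₂) :
    deg (completeBipartiteGraph W₁ W₂) (Sum.inr b) = Nat.card W₁ := by
  have : (completeBipartiteGraph W₁ W₂).neighborSet (Sum.inr b) = Set.range Sum.inl := by
    ext (_ | _) <;> simp
  rw [deg, this, Set.ncard_range_of_injective Sum.inl_injective]

lemma maxDeg_completeBipartiteGraph [Fintype W₁] [Fintype W₂] [Nonempty W₁]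
    (h : Nat.card W₁ ≤ Nat.card W₂) :
    maxDeg (completeBipartiteGraph W₁ W₂) = Nat.card W₂ := by
  refine le_antisymm (maxDeg_le_of_forall_deg_le fun v => ?_) ?_
  · rcases v with a | b
    · exact (deg_completeBipartiteGraph_inl a).le
    · exact (deg_completeBipartiteGraph_inr b).trans_le h
  · exact deg_completeBipartiteGraph_inl (Classical.arbitrary W₁) ▸ deg_le_maxDeg _ _

end completeBipartiteGraph

lemma IsSignature.mono {H : SimpleGraph V} (hσ : IsSignature G σ)
    (hHG : H.edgeSet ⊆ G.edgeSet) : IsSignature H σ :=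
  fun e he => hσ e (hHG he)

lemma colorable_two_mul_of_iUnion_edgeSet {s : ℕ} (H : Fin s → SimpleGraph V)
    (hdisj : Pairwise fun j j' => Disjoint (H j).edgeSet (H j').edgeSet)
    (hunion : ⋃ j, (H j).edgeSet = G.edgeSet) (hcol : ∀ j, Colorable (H j) σ 2) :
    Colorable G σ (2 * s) := by
  classical
  choose g hg using hcol
  set f : V → Sym2 V → ℤ := fun u e =>
    ∑ j, if e ∈ (H j).edgeSet then ((j : ℤ) + 1) * g j u e else 0
  have hf (j u e) (he : e ∈ (H j).edgeSet) : f u e = ((j : ℤ) + 1) * g j u e := by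
    refine (Finset.sum_eq_single j (fun j' _ hj' => if_neg fun he' => ?_) (by simp)).trans
      (if_pos he)
    exact Set.disjoint_left.mp (hdisj hj') he' he
  have hclass : ∀ u v, G.Adj u v → ∃ j, (H j).Adj u v := fun u v huv => by
    rw [← mem_edgeSet, ← hunion, Set.mem_iUnion] at huv
    exact huv
  have hunit : ∀ j u v, (H j).Adj u v → (g j u s(u, v)).natAbs = 1 := fun j u v huv => by
    rcases mem_colorSet_two.mp ((hg j).1 u v huv) with h | h <;> simp [h]
  refine ⟨f, fun u v huv => ?_, fun u v huv => ?_, fun u v w huv huw hvw => ?_⟩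
  · obtain ⟨j, hj⟩ := hclass u v huv
    rw [hf j u _ hj, mem_colorSet_two_mul, ← Int.natAbs_ne_zero, Int.natAbs_mul, hunit j u v hj]
    omega
  · obtain ⟨j, hj⟩ := hclass u v huv
    rw [hf j u _ hj, hf j v _ hj, (hg j).2.1 u v hj]
    ring
  · obtain ⟨j, hj⟩ := hclass u v huv
    obtain ⟨j', hj'⟩ := hclass u w huw
    rw [hf j u _ hj, hf j' u _ hj']
    by_cases hjj : j = j'
    · subst hjj
      exact fun h => (hg j).2.2 u v w hj hj' hvw (mul_left_cancel₀ (by positivity) h)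
    · intro h
      have := congrArg Int.natAbs h
      rw [Int.natAbs_mul, Int.natAbs_mul, hunit j u v hj, hunit j' u w hj'] at this
      omega

lemma exists_potential_of_sign_seq (a : ℕ → ℤ) (n : ℕ) (ha : ∀ k < n, a k = 1 ∨ a k = -1) :
    ∃ τ : ℕ → ℤ, (∀ m ≤ n, τ m = 1 ∨ τ m = -1) ∧ ∀ k < n, a k = τ k * τ (k + 1) := by
  set τ : ℕ → ℤ := fun m => ∏ k ∈ Finset.range m, a k
  have hτ (m : ℕ) (hm : m ≤ n) : τ m = 1 ∨ τ m = -1 := by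
    refine Finset.prod_induction _ (fun b => b = 1 ∨ b = -1) ?_ (Or.inl rfl) fun k hk => ?_
    · rintro b c (rfl | rfl) (rfl | rfl) <;> norm_num
    · exact ha k (by simp only [Finset.mem_range] at hk; omega)
  refine ⟨τ, hτ, fun k hk => ?_⟩
  rw [show τ (k + 1) = τ k * a k from Finset.prod_range_succ _ _]
  rcases hτ k hk.le with h | h <;> simp [h]

def IsPathSeq (H : SimpleGraph V) (x : ℕ → V) (n : ℕ) : Prop :=
  Set.InjOn x (Set.Iic n) ∧ ∀ e, e ∈ H.edgeSet ↔ ∃ k < n, e = s(x k, x (k + 1))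

lemma isPathGraph_iff_exists_isPathSeq {H : SimpleGraph V} :
    IsPathGraph H ↔ ∃ x n, IsPathSeq H x n := by
  constructor
  · rintro ⟨u, v, p, hp, he⟩
    exact ⟨p.getVert, p.length, hp.getVert_injOn, fun e => (he e).trans
      Walk.mem_edges_iff_exists_getVert⟩
  · rintro ⟨x, n, hinj, he⟩
    obtain ⟨p, hlen, hp⟩ := exists_walk_getVert_eq x n fun k hk =>
      (he _).mpr ⟨k, hk, rfl⟩
    refine ⟨_, _, p, (Walk.IsPath.getVert_injOn_iff p).mp ?_, fun e => ?_⟩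
    · rw [hlen]
      exact hinj.congr fun k hk => (hp k hk).symm
    · rw [he, Walk.mem_edges_iff_exists_getVert, hlen]
      refine exists_congr fun k => and_congr_right fun hk => ?_
      rw [hp k hk.le, hp (k + 1) hk]

namespace IsPathSeq

variable {H : SimpleGraph V} {x : ℕ → V} {n : ℕ}

lemma eq_of_apply_eq (hx : IsPathSeq H x n) {k k' : ℕ} (hk : k ≤ n) (hk' : k' ≤ n)
    (h : x k = x k') : k = k' :=
  hx.1 hk hk' h

lemma mk_mem_edgeSet (hx : IsPathSeq H x n) {k : ℕ} (hk : k < n) :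
    s(x k, x (k + 1)) ∈ H.edgeSet :=
  (hx.2 _).mpr ⟨k, hk, rfl⟩

lemma adj_iff (hx : IsPathSeq H x n) {u v : V} :
    H.Adj u v ↔ ∃ k < n, (u = x k ∧ v = x (k + 1)) ∨ (u = x (k + 1) ∧ v = x k) := by
  simp only [← mem_edgeSet, hx.2, Sym2.eq_iff]

lemma ncard_edgeSet (hx : IsPathSeq H x n) : H.edgeSet.ncard = n := by
  classical
  have hset : H.edgeSet = ↑((Finset.range n).image fun k => s(x k, x (k + 1))) := by
    ext e
    simp [hx.2, eq_comm]
  rw [hset, Set.ncard_coe_finset, Finset.card_image_of_injOn, Finset.card_range]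
  intro k hk k' hk' h
  simp only [Finset.coe_range, Set.mem_Iio] at hk hk'
  rcases Sym2.eq_iff.mp h with ⟨h1, -⟩ | ⟨h1, h2⟩
  · exact hx.eq_of_apply_eq hk.le hk'.le h1
  · have := hx.eq_of_apply_eq hk.le hk' h1
    have := hx.eq_of_apply_eq hk hk'.le h2
    omega

lemma colorable_two (hx : IsPathSeq H x n) (hσ : IsSignature H σ) : Colorable H σ 2 := by
  classical
  obtain ⟨τ, hτ, hστ⟩ := exists_potential_of_sign_seq (fun k => σ s(x k, x (k + 1))) n
    fun k hk => hσ _ (hx.mk_mem_edgeSet hk)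
  set pos := Function.invFunOn x (Set.Iic n)
  have hpos : ∀ k ≤ n, pos (x k) = k := fun k hk => hx.1.leftInvOn_invFunOn hk
  -- after switching by `τ` all edges are positive; the sign records whether `u` comes first on `e`
  set g : V → Sym2 V → ℤ := fun u e =>
    τ (pos u) * if ∀ w ∈ e, pos u ≤ pos w then 1 else -1
  have hg_fst : ∀ k < n, g (x k) s(x k, x (k + 1)) = τ k := fun k hk => by
    simp [g, hpos k hk.le, hpos (k + 1) hk]
  have hg_snd : ∀ k < n, g (x (k + 1)) s(x k, x (k + 1)) = -τ (k + 1) := fun k hk => by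
    simp [g, hpos k hk.le, hpos (k + 1) hk]
  refine ⟨g, fun u v huv => ?_, fun u v huv => ?_, fun u v w huv huw hvw => ?_⟩
  · rw [mem_colorSet_two]
    obtain ⟨k, hk, ⟨rfl, rfl⟩ | ⟨rfl, rfl⟩⟩ := hx.adj_iff.mp huv
    · rw [hg_fst k hk]
      exact hτ k hk.le
    · rw [Sym2.eq_swap, hg_snd k hk]
      rcases hτ (k + 1) hk with h | h <;> simp [h]
  · obtain ⟨k, hk, ⟨rfl, rfl⟩ | ⟨rfl, rfl⟩⟩ := hx.adj_iff.mp huv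
    · rw [hg_fst k hk, hg_snd k hk, hστ k hk]
      rcases hτ (k + 1) hk with h | h <;> simp [h]
    · rw [Sym2.eq_swap, hg_fst k hk, hg_snd k hk, hστ k hk]
      rcases hτ k hk.le with h | h <;> simp [h]
  · obtain ⟨k, hk, ⟨rfl, rfl⟩ | ⟨rfl, rfl⟩⟩ := hx.adj_iff.mp huv <;>
    obtain ⟨k', hk', ⟨hu, rfl⟩ | ⟨hu, rfl⟩⟩ := hx.adj_iff.mp huw
    · obtain rfl := hx.eq_of_apply_eq hk.le hk'.le hu
      exact absurd rfl hvw
    · obtain rfl : k = k' + 1 := hx.eq_of_apply_eq hk.le hk' hu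
      rw [hg_fst _ hk, Sym2.eq_swap, hg_snd k' hk']
      rcases hτ (k' + 1) hk' with h | h <;> simp [h]
    · obtain rfl : k' = k + 1 := (hx.eq_of_apply_eq hk hk'.le hu).symm
      rw [hg_fst _ hk', Sym2.eq_swap, hg_snd k hk]
      rcases hτ (k + 1) hk with h | h <;> simp [h]
    · obtain rfl : k = k' := Nat.succ_injective (hx.eq_of_apply_eq hk hk' hu)
      exact absurd rfl hvw

end IsPathSeq

lemma colorable_two_of_isPathGraph {H : SimpleGraph V} (hH : IsPathGraph H)
    (hσ : IsSignature H σ) : Colorable H σ 2 := by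
  obtain ⟨x, n, hx⟩ := isPathGraph_iff_exists_isPathSeq.mp hH
  exact hx.colorable_two hσ

theorem colorable_two_mul_of_isPathGraph {s : ℕ} (H : Fin s → SimpleGraph V)
    (hpath : ∀ j, IsPathGraph (H j))
    (hdisj : Pairwise fun j j' => Disjoint (H j).edgeSet (H j').edgeSet)
    (hunion : ⋃ j, (H j).edgeSet = G.edgeSet) (hσ : IsSignature G σ) :
    Colorable G σ (2 * s) :=
  colorable_two_mul_of_iUnion_edgeSet H hdisj hunion fun j =>
    colorable_two_of_isPathGraph (hpath j)
      (hσ.mono (hunion ▸ Set.subset_iUnion (fun j => (H j).edgeSet) j))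

end Signed

lemma Nat.mod_eq_ite_of_lt_two_mul {a n : ℕ} (h : a < 2 * n) :
    a % n = if a < n then a else a - n := by
  split_ifs with han
  · exact Nat.mod_eq_of_lt han
  · rw [Nat.mod_eq_sub_mod (not_lt.mp han), Nat.mod_eq_of_lt (by omega)]

section bipPath

variable {r t : ℕ}

lemma bidx_injOn (ht : 0 < t) (c : ℕ) : Set.InjOn (fun m => bidx t ht (m + c)) (Set.Iio t) :=
  fun _ hm _ hm' h => (Nat.ModEq.add_right_cancel' c (Fin.ext_iff.mp h)).eq_of_lt_of_lt hm hm'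

def offset (i : Fin r) (b : Fin t) : ℕ := (b.val + t - i.val) % t

lemma bidx_add_eq_iff (ht : 0 < t) (hrt : r ≤ t) (i : Fin r) (b : Fin t) {d : ℕ} (hd : d < t) :
    bidx t ht (i + d) = b ↔ offset i b = d := by
  have := i.isLt
  simp only [Fin.ext_iff, bidx, offset]
  rw [Nat.mod_eq_ite_of_lt_two_mul (by omega), Nat.mod_eq_ite_of_lt_two_mul (by omega)]
  split_ifs <;> omega

-- `% r` only makes the function total: it is the identity on the vertices `k ≤ 2 * r`.
def bipPathVert (hr : 0 < r) (ht : 0 < t) (j k : ℕ) : Fin r ⊕ Fin t :=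
  if k % 2 = 0 then Sum.inr (bidx t ht (k / 2 + 2 * j))
  else Sum.inl ⟨k / 2 % r, Nat.mod_lt _ hr⟩

variable (hr : 0 < r) (ht : 0 < t) (j : ℕ)

lemma bipPathVert_two_mul (m : ℕ) :
    bipPathVert hr ht j (2 * m) = Sum.inr (bidx t ht (m + 2 * j)) := by
  simp [bipPathVert]

lemma bipPathVert_two_mul_add_one {m : ℕ} (hm : m < r) :
    bipPathVert hr ht j (2 * m + 1) = Sum.inl ⟨m, hm⟩ := by
  simp [bipPathVert, Nat.mul_add_div, Nat.mod_eq_of_lt hm]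

lemma mem_edgeSet_bipPath {e : Sym2 (Fin r ⊕ Fin t)} :
    e ∈ (bipPath r t ht j).edgeSet ↔ ∃ i : Fin r,
      e = s(Sum.inl i, Sum.inr (bidx t ht (i + 2 * j))) ∨
      e = s(Sum.inl i, Sum.inr (bidx t ht (i + 2 * j + 1))) := by
  rw [bipPath, edgeSet_fromEdgeSet, Set.mem_sdiff, Set.mem_ofPred_eq, and_iff_left_iff_imp]
  rintro ⟨i, rfl | rfl⟩ <;> simp

lemma isPathSeq_bipPath (hrt : r < t) :
    IsPathSeq (bipPath r t ht j) (bipPathVert hr ht j) (2 * r) := by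
  refine ⟨fun k hk k' hk' h => ?_, fun e => ?_⟩
  · simp only [Set.mem_Iic] at hk hk'
    obtain ⟨m, rfl | rfl⟩ := Nat.even_or_odd' k <;>
      obtain ⟨m', rfl | rfl⟩ := Nat.even_or_odd' k'
    · rw [bipPathVert_two_mul, bipPathVert_two_mul, Sum.inr.injEq] at h
      rw [bidx_injOn ht (2 * j) (show m < t by omega) (show m' < t by omega) h]
    · simp [bipPathVert_two_mul, bipPathVert_two_mul_add_one hr ht j (show m' < r by omega)] at h
    · simp [bipPathVert_two_mul, bipPathVert_two_mul_add_one hr ht j (show m < r by omega)] at h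
    · rw [bipPathVert_two_mul_add_one hr ht j (show m < r by omega),
        bipPathVert_two_mul_add_one hr ht j (show m' < r by omega), Sum.inl.injEq,
        Fin.mk.injEq] at h
      rw [h]
  · rw [mem_edgeSet_bipPath]
    constructor
    · rintro ⟨i, rfl | rfl⟩
      · refine ⟨2 * i, by omega, ?_⟩
        rw [bipPathVert_two_mul, bipPathVert_two_mul_add_one hr ht j i.isLt, Sym2.eq_swap]
      · refine ⟨2 * i + 1, by omega, ?_⟩
        rw [bipPathVert_two_mul_add_one hr ht j i.isLt,
          show 2 * (i : ℕ) + 1 + 1 = 2 * (i + 1) by ring,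
          bipPathVert_two_mul, Nat.add_right_comm]
    · rintro ⟨k, hk, rfl⟩
      obtain ⟨m, rfl | rfl⟩ := Nat.even_or_odd' k
      · refine ⟨⟨m, by omega⟩, Or.inl ?_⟩
        rw [bipPathVert_two_mul, bipPathVert_two_mul_add_one hr ht j (by omega), Sym2.eq_swap]
      · refine ⟨⟨m, by omega⟩, Or.inr ?_⟩
        rw [bipPathVert_two_mul_add_one hr ht j (by omega),
          show 2 * m + 1 + 1 = 2 * (m + 1) by ring,
          bipPathVert_two_mul, Nat.add_right_comm]

lemma bipPath_le : bipPath r t ht j ≤ completeBipartiteGraph (Fin r) (Fin t) := by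
  rw [← edgeSet_subset_edgeSet]
  intro e he
  obtain ⟨i, rfl | rfl⟩ := (mem_edgeSet_bipPath ht j).mp he <;> simp

lemma mk_mem_edgeSet_bipPath_iff (hrt : r ≤ t) (hj : 2 * j + 1 < t) (i : Fin r) (b : Fin t) :
    s(Sum.inl i, Sum.inr b) ∈ (bipPath r t ht j).edgeSet ↔ offset i b / 2 = j := by
  simp only [mem_edgeSet_bipPath, Sym2.eq_iff, Sum.inl.injEq, Sum.inr.injEq, reduceCtorEq,
    and_false, or_false, ← and_or_left, exists_eq_left', eq_comm (a := b), add_assoc,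
    bidx_add_eq_iff ht hrt i b (show 2 * j < t by omega), bidx_add_eq_iff ht hrt i b hj]
  omega

lemma disjoint_edgeSet_bipPath (hrt : r ≤ t) {j j' : ℕ} (hj : 2 * j + 1 < t)
    (hj' : 2 * j' + 1 < t) (hne : j ≠ j') :
    Disjoint (bipPath r t ht j).edgeSet (bipPath r t ht j').edgeSet := by
  refine Set.disjoint_left.mpr fun e he he' => hne ?_
  have hK := edgeSet_subset_edgeSet.mpr (bipPath_le ht j) he
  rw [edgeSet_completeBipartiteGraph] at hK
  obtain ⟨⟨i, b⟩, rfl⟩ := hK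
  exact ((mk_mem_edgeSet_bipPath_iff ht j hrt hj i b).mp he).symm.trans
    ((mk_mem_edgeSet_bipPath_iff ht j' hrt hj' i b).mp he')

lemma iUnion_edgeSet_bipPath {s : ℕ} (hrt : r ≤ t) (hts : t = 2 * s) :
    ⋃ j : Fin s, (bipPath r t ht j).edgeSet =
      (completeBipartiteGraph (Fin r) (Fin t)).edgeSet := by
  refine subset_antisymm (Set.iUnion_subset fun j => edgeSet_subset_edgeSet.mpr
    (bipPath_le ht j)) ?_
  rw [edgeSet_completeBipartiteGraph]
  rintro _ ⟨⟨i, b⟩, rfl⟩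
  have : offset i b < t := Nat.mod_lt _ ht
  exact Set.mem_iUnion.mpr ⟨⟨offset i b / 2, by omega⟩,
    (mk_mem_edgeSet_bipPath_iff ht _ hrt (by omega) i b).mpr rfl⟩

end bipPath

/-- For `r < t = 2s`, the graphs `G_j` are pairwise edge-disjoint paths with `2r` edges
decomposing `K_{r,t}` into `s` paths; hence `K_{r,t}` is of class `1^±`. -/
theorem bipartite_even_class1 (r t s : ℕ) (hr : 0 < r) (hrt : r < t) (hts : t = 2 * s) :
    (∀ j : Fin s, IsPathGraph (bipPath r t (by omega) j.val)) ∧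
    (∀ j : Fin s, (bipPath r t (by omega) j.val).edgeSet.ncard = 2 * r) ∧
    (∀ j : Fin s, bipPath r t (by omega) j.val ≤ completeBipartiteGraph (Fin r) (Fin t)) ∧
    (∀ j j' : Fin s, j ≠ j' →
      Disjoint ((bipPath r t (by omega) j.val).edgeSet)
        ((bipPath r t (by omega) j'.val).edgeSet)) ∧
    (⋃ j : Fin s, (bipPath r t (by omega) j.val).edgeSet)
      = (completeBipartiteGraph (Fin r) (Fin t)).edgeSet ∧
    Class1pm (completeBipartiteGraph (Fin r) (Fin t)) := by
  have ht : 0 < t := by omega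
  have hpath (j : Fin s) := isPathSeq_bipPath hr ht j hrt
  have hpathGraph (j : Fin s) : IsPathGraph (bipPath r t ht j) :=
    isPathGraph_iff_exists_isPathSeq.mpr ⟨_, _, hpath j⟩
  have hdisj (j j' : Fin s) (hne : j ≠ j') :=
    disjoint_edgeSet_bipPath ht hrt.le (by omega) (by omega) (Fin.val_injective.ne hne)
  have hunion := iUnion_edgeSet_bipPath ht hrt.le hts
  have : Nonempty (Fin r) := ⟨⟨0, hr⟩⟩
  have hmaxDeg : maxDeg (completeBipartiteGraph (Fin r) (Fin t)) = 2 * s := by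
    rw [maxDeg_completeBipartiteGraph (by simpa using hrt.le), Nat.card_fin, hts]
  refine ⟨hpathGraph, fun j => (hpath j).ncard_edgeSet, fun j => bipPath_le ht j, hdisj, hunion,
    fun σ hσ => chromIndex_eq_maxDeg_of_colorable ?_⟩
  rw [hmaxDeg]
  exact colorable_two_mul_of_isPathGraph _ hpathGraph hdisj hunion hσ
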